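/- arXiv:1801.09709 — 3 statements merged into one kernel-verified Lean document; each statement's English description precedes it below -/
import Mathlib

section
/- Among all probability distributions on the nonnegative integers with mean equal to C, the distribution concentrated on {⌊C⌋, ⌈C⌉} (i.e., stochastic rounding of C) uniquely minimizes the variance. -/
/-!
Put `a = ⌊C⌋`, so `⌈C⌉ = a + 1`. Since `(x - C)² - (x - a)(x - a - 1)` is affine in `x`, averaging
against a distribution with mean `C` gives
`Var = E[(X - a)(X - a - 1)] + (a + 1 - C)(C - a)`.
For an integer `X` the product `(X - a)(X - a - 1)` is nonnegative, and it vanishes exactly on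
`{a, a + 1}`; so the variance is minimal exactly when the distribution lives on `{a, a + 1}`,
where mass and mean determine it.
-/

lemma Int.sub_mul_sub_add_one_nonneg (n a : ℤ) : 0 ≤ (n - a) * (n - (a + 1)) := by
  rcases le_or_gt n a with h | h <;> nlinarith

lemma Nat.ceil_eq_floor_add_one {R : Type*} [Semiring R] [LinearOrder R] [IsStrictOrderedRing R]
    [FloorSemiring R] {C : R} (hC : 0 ≤ C) (hni : (⌊C⌋₊ : R) ≠ C) :
    ⌈C⌉₊ = ⌊C⌋₊ + 1 :=
  le_antisymm (Nat.ceil_le_floor_add_one C) (Nat.lt_ceil.2 ((Nat.floor_le hC).lt_of_ne hni))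

lemma hasSum_sub_mul_sub_mul {ι : Type*} {p x : ι → ℝ} {C V : ℝ} (h1 : HasSum p 1)
    (hm : HasSum (fun i => x i * p i) C) (hv : HasSum (fun i => (x i - C) ^ 2 * p i) V)
    (a b : ℝ) :
    HasSum (fun i => (x i - a) * (x i - b) * p i) (V - (b - C) * (C - a)) := by
  rw [show V - (b - C) * (C - a) = V - (a + b - 2 * C) * C - (C ^ 2 - a * b) * 1 by ring]
  exact ((hv.sub (hm.mul_left _)).sub (h1.mul_left _)).congr_fun fun i => by ring

lemma eq_of_hasSum_of_support_subset_pair {p : ℕ → ℝ} {C : ℝ} {a : ℕ} (h1 : HasSum p 1)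
    (hm : HasSum (fun n : ℕ => (n : ℝ) * p n) C) (hz : ∀ n, n ≠ a → n ≠ a + 1 → p n = 0) :
    p a = a + 1 - C ∧ p (a + 1) = C - a := by
  have hpair : ∀ n ∉ ({a, a + 1} : Finset ℕ), n ≠ a ∧ n ≠ a + 1 := by simp
  have htot := h1.unique <| hasSum_sum_of_ne_finset_zero fun n hn =>
    hz n (hpair n hn).1 (hpair n hn).2
  have hmean := hm.unique <| hasSum_sum_of_ne_finset_zero fun n hn => by
    rw [hz n (hpair n hn).1 (hpair n hn).2, mul_zero]
  rw [Finset.sum_pair (by omega)] at htot hmean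
  push_cast at hmean
  exact ⟨by linear_combination hmean - (a + 1 : ℝ) * htot, by linear_combination a * htot - hmean⟩

/-- Among all probability distributions on the nonnegative integers with mean
equal to a non-integral `C ≥ 0`, the distribution concentrated on `{⌊C⌋, ⌈C⌉}` (stochastic
rounding of `C`, giving mass `⌈C⌉ - C` to `⌊C⌋` and `C - ⌊C⌋` to `⌈C⌉`) uniquely minimizes
the variance, whose minimal value is `(⌈C⌉ - C) * (C - ⌊C⌋)`. -/
theorem stochastic_rounding_min_variance
    (C : ℝ) (hC : 0 ≤ C) (hni : (⌊C⌋₊ : ℝ) ≠ C)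
    (p : ℕ → ℝ) (hnn : ∀ n, 0 ≤ p n)
    (hsum : Summable p) (htot : ∑' (n : ℕ), p n = 1)
    (hms : Summable (fun n : ℕ => (n : ℝ) * p n)) (hmean : ∑' (n : ℕ), (n : ℝ) * p n = C)
    (hvs : Summable (fun n : ℕ => ((n : ℝ) - C) ^ 2 * p n)) :
    ((⌈C⌉₊ : ℝ) - C) * (C - ⌊C⌋₊) ≤ ∑' (n : ℕ), ((n : ℝ) - C) ^ 2 * p n ∧
    ((∑' (n : ℕ), ((n : ℝ) - C) ^ 2 * p n = ((⌈C⌉₊ : ℝ) - C) * (C - ⌊C⌋₊)) ↔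
      (p ⌊C⌋₊ = (⌈C⌉₊ : ℝ) - C ∧ p ⌈C⌉₊ = C - (⌊C⌋₊ : ℝ) ∧
        ∀ n, n ≠ ⌊C⌋₊ → n ≠ ⌈C⌉₊ → p n = 0)) := by
  rw [Nat.ceil_eq_floor_add_one hC hni]
  push_cast
  set a := ⌊C⌋₊
  set V := ∑' (n : ℕ), ((n : ℝ) - C) ^ 2 * p n
  have h1 : HasSum p 1 := htot ▸ hsum.hasSum
  have hm : HasSum (fun n : ℕ => (n : ℝ) * p n) C := hmean ▸ hms.hasSum
  set g : ℕ → ℝ := fun n => ((n : ℝ) - a) * ((n : ℝ) - (a + 1)) * p n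
  have hg : HasSum g (V - (a + 1 - C) * (C - a)) := hasSum_sub_mul_sub_mul h1 hm hvs.hasSum _ _
  have hg_nonneg (n : ℕ) : 0 ≤ g n :=
    mul_nonneg (by exact_mod_cast Int.sub_mul_sub_add_one_nonneg n a) (hnn n)
  have hg_eq_zero (n : ℕ) : g n = 0 ↔ (n ≠ a → n ≠ a + 1 → p n = 0) := by
    simp only [g, mul_eq_zero, sub_eq_zero]
    norm_cast
    tauto
  have hV_eq : V - (a + 1 - C) * (C - a) = 0 ↔ ∀ n, n ≠ a → n ≠ a + 1 → p n = 0 :=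
    calc V - (a + 1 - C) * (C - a) = 0 ↔ HasSum g 0 := ⟨fun h => h ▸ hg, hg.unique⟩
      _ ↔ g = 0 := hasSum_zero_iff_of_nonneg hg_nonneg
      _ ↔ _ := by simp only [funext_iff, hg_eq_zero, Pi.zero_apply]
  refine ⟨sub_nonneg.1 (hg.nonneg hg_nonneg), ?_⟩
  rw [← sub_eq_zero, hV_eq]
  refine ⟨fun hz => ?_, fun h => h.2.2⟩
  obtain ⟨hpa, hpb⟩ := eq_of_hasSum_of_support_subset_pair h1 hm hz
  exact ⟨hpa, hpb, hz⟩
end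

section
/- Let C_t = R_t + A_t where, conditionally on C_{t−1} and batch size B_t, R_t ~ Binomial(C_{t−1}, p) and A_t ~ Binomial(B_t, q) are independent, with {B_t} i.i.d. of mean b and variance σ²_B, p ∈ (0,1), q = n(1−p)/b, and C_0 = n. Then Var[C_t] = αn + σ²_B q²/(1−p²) + O(p^t), where α = (1+p−q)/(1+p). -/
/-!
Conditionally on `C_{t-1} = k` and `B_t = m`, `C_t` is the sum of independent `Binomial (k, p)` and
`Binomial (m, q)` variables, whose first two moments come from the Bernstein polynomial identities.
As `B_t` is independent of `C_{t-1}`, this gives `E C_t = p E C_{t-1} + q b`, hence `E C_t = n`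
because `b q = n (1 - p)`, and the affine recursion
`E C_t² = p² E C_{t-1}² + p (1 - p) n + 2 p q n b + q² (σ² + b²) + q (1 - q) b`,
whose fixed point is `n² + α n + σ² q² / (1 - p²)`. Starting from `E C_0² = n²`, this gives
`Var C_t = (1 - p^(2t)) (α n + σ² q² / (1 - p²))`.
-/

open MeasureTheory

/-- The probability that a `Binomial (k, r)` random variable equals `i`. -/
noncomputable def binomPMF (r : ℝ) (k i : ℕ) : ℝ :=
  if i ≤ k then (k.choose i : ℝ) * r ^ i * (1 - r) ^ (k - i) else 0

open ProbabilityTheory Finset ENNReal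

section Binomial

variable {r : ℝ} {k i : ℕ}

lemma binomPMF_of_le (h : i ≤ k) : binomPMF r k i = (bernsteinPolynomial ℝ k i).eval r := by
  simp [binomPMF, bernsteinPolynomial, h]

lemma binomPMF_of_lt (h : k < i) : binomPMF r k i = 0 := by
  simp [binomPMF, Nat.not_le.mpr h]

lemma binomPMF_nonneg (h0 : 0 ≤ r) (h1 : r ≤ 1) (k i : ℕ) : 0 ≤ binomPMF r k i := by
  have : 0 ≤ 1 - r := by linarith
  unfold binomPMF
  split_ifs <;> positivity

noncomputable def binomExpect (r : ℝ) (k : ℕ) (f : ℕ → ℝ) : ℝ :=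
  ∑ i ∈ range (k + 1), f i * binomPMF r k i

lemma binomExpect_nonneg (h0 : 0 ≤ r) (h1 : r ≤ 1) {f : ℕ → ℝ} (hf : 0 ≤ f) :
    0 ≤ binomExpect r k f :=
  sum_nonneg fun i _ => mul_nonneg (hf i) (binomPMF_nonneg h0 h1 k i)

open Polynomial in
lemma binomExpect_quadratic {f : ℕ → ℝ} {a b c : ℝ} (hf : ∀ i, f i = a + b * i + c * i ^ 2) :
    binomExpect r k f = a + b * (k * r) + c * (k * (k - 1) * r ^ 2 + k * r) := by
  have h0 := congrArg (eval r) (bernsteinPolynomial.sum ℝ k)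
  have h1 := congrArg (eval r) (bernsteinPolynomial.sum_smul ℝ k)
  have h2 := congrArg (eval r) (bernsteinPolynomial.sum_mul_smul ℝ k)
  simp only [eval_finsetSum, nsmul_eq_mul, eval_mul, eval_natCast, eval_X, eval_pow, eval_one,
    Nat.cast_mul] at h0 h1 h2
  have hfall : ∀ i : ℕ, (i : ℝ) * ((i - 1 : ℕ) : ℝ) = i * (i - 1) := by
    rintro (_ | i) <;> simp
  simp only [hfall] at h2
  rw [binomExpect, sum_congr rfl fun i hi => by
    rw [hf, binomPMF_of_le (Nat.lt_succ_iff.mp (mem_range.mp hi))]]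
  have hsplit : ∀ i : ℕ, (a + b * i + c * (i : ℝ) ^ 2) * (bernsteinPolynomial ℝ k i).eval r
      = a * (bernsteinPolynomial ℝ k i).eval r + b * (i * (bernsteinPolynomial ℝ k i).eval r)
        + c * (i * (i - 1) * (bernsteinPolynomial ℝ k i).eval r
          + i * (bernsteinPolynomial ℝ k i).eval r) := fun i => by ring
  simp only [hsplit, sum_add_distrib, ← mul_sum, h0, h1, h2]
  ring

lemma binomExpect_const (a : ℝ) : binomExpect r k (fun _ => a) = a := by
  rw [binomExpect_quadratic (a := a) (b := 0) (c := 0) fun _ => by ring]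
  ring

lemma binomExpect_binomExpect_add {p q : ℝ} (k m : ℕ) :
    (binomExpect p k fun i => binomExpect q m fun j => ((i + j : ℕ) : ℝ)) = p * k + q * m := by
  rw [binomExpect_quadratic (a := q * m) (b := 1) (c := 0) fun i => by
    rw [binomExpect_quadratic (a := i) (b := 1) (c := 0) fun j => by push_cast; ring]
    ring]
  ring

lemma binomExpect_binomExpect_add_sq {p q : ℝ} (k m : ℕ) :
    (binomExpect p k fun i => binomExpect q m fun j => ((i + j : ℕ) : ℝ) ^ 2)
      = p ^ 2 * k ^ 2 + p * (1 - p) * k + 2 * p * q * (k * m) + q ^ 2 * m ^ 2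
        + q * (1 - q) * m := by
  rw [binomExpect_quadratic (a := m * (m - 1) * q ^ 2 + m * q) (b := 2 * q * m) (c := 1)
    fun i => by
      rw [binomExpect_quadratic (a := (i : ℝ) ^ 2) (b := 2 * i) (c := 1) fun j => by
        push_cast; ring]
      ring]
  ring

end Binomial

section Convolution

variable {p q : ℝ} {k m : ℕ}

noncomputable def binomConv (p q : ℝ) (k m c : ℕ) : ℝ :=
  ∑ i ∈ range (c + 1), binomPMF p k i * binomPMF q m (c - i)

lemma binomConv_of_lt {c : ℕ} (h : k + m < c) : binomConv p q k m c = 0 :=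
  sum_eq_zero fun i _ => by
    rcases le_or_gt i k with hi | hi
    · rw [binomPMF_of_lt (by omega : m < c - i), mul_zero]
    · rw [binomPMF_of_lt hi, zero_mul]

lemma sum_mul_binomConv (f : ℕ → ℝ) :
    ∑ c ∈ range (k + m + 1), f c * binomConv p q k m c
      = binomExpect p k fun i => binomExpect q m fun j => f (i + j) := by
  set F : ℕ → ℕ → ℝ := fun i j => f (i + j) * binomPMF q m j * binomPMF p k i
  have hF : ∀ i j, k < i ∨ m < j → F i j = 0 := by
    rintro i j (h | h) <;> simp [F, binomPMF_of_lt h]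
  calc ∑ c ∈ range (k + m + 1), f c * binomConv p q k m c
      = ∑ c ∈ range (k + m + 1), ∑ i ∈ range (c + 1), F i (c - i) := by
        refine sum_congr rfl fun c _ => ?_
        rw [binomConv, mul_sum]
        refine sum_congr rfl fun i hi => ?_
        simp only [F, show i + (c - i) = c by have := mem_range.mp hi; omega]
        ring
    _ = ∑ i ∈ range (k + m + 1), ∑ j ∈ range (k + m + 1 - i), F i j := sum_range_diag_flip _ F
    _ = ∑ i ∈ range (k + 1), ∑ j ∈ range (m + 1), F i j := by
        rw [← sum_subset (range_subset_range.mpr (by omega : k + 1 ≤ k + m + 1))]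
        · refine sum_congr rfl fun i hi => ?_
          have := mem_range.mp hi
          exact (sum_subset (range_subset_range.mpr (by omega)) fun j hj hj' =>
            hF i j (.inr (by simp at hj'; omega))).symm
        · intro i _ hi
          exact sum_eq_zero fun j _ => hF i j (.inl (by simp at hi; omega))
    _ = _ := by simp only [binomExpect, F, sum_mul]

lemma tsum_ofReal_mul_binomConv (hp0 : 0 ≤ p) (hp1 : p ≤ 1) (hq0 : 0 ≤ q) (hq1 : q ≤ 1)
    {f : ℕ → ℝ} (hf : 0 ≤ f) :
    ∑' c, ENNReal.ofReal (f c) * ENNReal.ofReal (binomConv p q k m c)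
      = ENNReal.ofReal (binomExpect p k fun i => binomExpect q m fun j => f (i + j)) := by
  have hconv : ∀ c, 0 ≤ binomConv p q k m c := fun c => sum_nonneg fun i _ =>
    mul_nonneg (binomPMF_nonneg hp0 hp1 k i) (binomPMF_nonneg hq0 hq1 m _)
  rw [tsum_eq_sum (s := range (k + m + 1)) fun c hc => by
      rw [binomConv_of_lt (by simpa using hc), ofReal_zero, mul_zero],
    ← sum_mul_binomConv, ofReal_sum_of_nonneg fun c _ => mul_nonneg (hf c) (hconv c)]
  exact sum_congr rfl fun c _ => (ofReal_mul (hf c)).symm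

end Convolution

lemma ENNReal.eq_of_le_of_tsum_le {α : Type*} {f g : α → ℝ≥0∞} (hf : ∑' a, f a ≠ ∞)
    (hle : ∀ a, f a ≤ g a) (hg : ∑' a, g a ≤ ∑' a, f a) (a : α) : f a = g a :=
  (hle a).eq_of_not_lt fun hlt => (ENNReal.tsum_lt_tsum hf hle hlt).not_ge hg

section Discrete

variable {Ω α β : Type*} [MeasurableSpace Ω] {μ : Measure Ω}
  [MeasurableSpace α] [Countable α] [MeasurableSingletonClass α]
  [MeasurableSpace β] [Countable β] [MeasurableSingletonClass β]

lemma lintegral_comp_eq_tsum {X : Ω → α} (hX : Measurable X) (g : α → ℝ≥0∞) :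
    ∫⁻ ω, g (X ω) ∂μ = ∑' a, g a * μ (X ⁻¹' {a}) := by
  rw [← lintegral_map (measurable_of_countable g) hX, lintegral_countable']
  simp_rw [Measure.map_apply hX (measurableSet_singleton _)]

lemma tsum_measure_inter_preimage_singleton {X : Ω → α} (hX : Measurable X) (s : Set Ω) :
    ∑' a, μ (s ∩ X ⁻¹' {a}) = μ s := by
  simpa [Measure.restrict_apply (hX (measurableSet_singleton _)), Set.inter_comm]
    using (lintegral_comp_eq_tsum (μ := μ.restrict s) hX 1).symm

lemma indepFun_of_measure_eq_mul [IsFiniteMeasure μ] {X : Ω → α} {Y : Ω → β}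
    (hX : Measurable X) (hY : Measurable Y)
    (h : ∀ a b, μ {ω | X ω = a ∧ Y ω = b} = μ {ω | X ω = a} * μ {ω | Y ω = b}) :
    IndepFun X Y μ := by
  rw [indepFun_iff_map_prod_eq_prod_map_map hX.aemeasurable hY.aemeasurable]
  refine Measure.ext_iff_singleton.mpr fun ⟨a, b⟩ => ?_
  rw [Measure.map_apply (hX.prodMk hY) (measurableSet_singleton _),
    ← Set.singleton_prod_singleton, Measure.prod_prod,
    Measure.map_apply hX (measurableSet_singleton _),
    Measure.map_apply hY (measurableSet_singleton _)]
  simpa [Set.preimage, Prod.mk.injEq] using h a b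

lemma identDistrib_of_measure_eq {X Y : Ω → α} (hX : Measurable X) (hY : Measurable Y)
    (h : ∀ a, μ {ω | X ω = a} = μ {ω | Y ω = a}) : IdentDistrib X Y μ μ where
  aemeasurable_fst := hX.aemeasurable
  aemeasurable_snd := hY.aemeasurable
  map_eq := Measure.ext_iff_singleton.mpr fun a => by
    rw [Measure.map_apply hX (measurableSet_singleton _),
      Measure.map_apply hY (measurableSet_singleton _)]
    exact h a

end Discrete

section Moments

variable {Ω : Type*} [MeasurableSpace Ω] {μ : Measure Ω}

lemma memLp_two_of_integrable_sub_sq [IsFiniteMeasure μ] {X : Ω → ℝ}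
    (hX : AEStronglyMeasurable X μ) (c : ℝ) (h : Integrable (fun ω => (X ω - c) ^ 2) μ) :
    MemLp X 2 μ := by
  simpa using ((memLp_two_iff_integrable_sq (hX.sub aestronglyMeasurable_const)).2 h).add
    (memLp_const c)

lemma integral_sq_eq_integral_sub_sq_add [IsProbabilityMeasure μ] {X : Ω → ℝ}
    (hX : MemLp X 2 μ) :
    ∫ ω, X ω ^ 2 ∂μ = ∫ ω, (X ω - ∫ ω', X ω' ∂μ) ^ 2 ∂μ + (∫ ω, X ω ∂μ) ^ 2 := by
  rw [← variance_eq_integral hX.aestronglyMeasurable.aemeasurable, variance_eq_sub hX]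
  simp

end Moments

lemma sub_eq_pow_mul_sub_of_recurrence {x : ℕ → ℝ} {a c L : ℝ}
    (hx : ∀ t, x (t + 1) = a * x t + c) (hL : L = a * L + c) (t : ℕ) : x t - L = a ^ t * (x 0 - L) := by
  induction t with
  | zero => simp
  | succ t ih => rw [hx, pow_succ]; linear_combination a * ih - hL

/-- `R` and `A` need not be measurable: only the (outer) measures of their joint events with
`X` and `N` are prescribed. -/
structure IsBinomialUpdate {Ω : Type*} [MeasurableSpace Ω] (μ : Measure Ω) (p q : ℝ)
    (X N Y : Ω → ℕ) : Prop where
  measurable_prev : Measurable X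
  measurable_batch : Measurable N
  measurable_next : Measurable Y
  exists_split : ∃ R A : Ω → ℕ, (∀ ω, Y ω = R ω + A ω) ∧ ∀ k m i j,
    μ {ω | X ω = k ∧ N ω = m ∧ R ω = i ∧ A ω = j}
      = μ {ω | X ω = k ∧ N ω = m} * ENNReal.ofReal (binomPMF p k i * binomPMF q m j)

namespace IsBinomialUpdate

variable {Ω : Type*} [MeasurableSpace Ω] {μ : Measure Ω} {p q : ℝ} {X N Y : Ω → ℕ}
  (h : IsBinomialUpdate μ p q X N Y)
include h

lemma measure_inter_le (hp0 : 0 ≤ p) (hp1 : p ≤ 1) (hq0 : 0 ≤ q) (hq1 : q ≤ 1) (k m c : ℕ) :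
    μ ({ω | X ω = k ∧ N ω = m} ∩ Y ⁻¹' {c})
      ≤ μ {ω | X ω = k ∧ N ω = m} * ENNReal.ofReal (binomConv p q k m c) := by
  obtain ⟨R, A, hsum, hlaw⟩ := h.exists_split
  calc μ ({ω | X ω = k ∧ N ω = m} ∩ Y ⁻¹' {c})
      ≤ μ (⋃ i ∈ range (c + 1), {ω | X ω = k ∧ N ω = m ∧ R ω = i ∧ A ω = c - i}) := by
        refine measure_mono fun ω ⟨⟨hk, hm⟩, hc⟩ => ?_
        have hRA : R ω + A ω = c := (hsum ω).symm.trans hc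
        exact Set.mem_biUnion (mem_coe.mpr (mem_range.mpr (by omega)))
          (show _ ∧ _ ∧ _ ∧ _ from ⟨hk, hm, rfl, by omega⟩)
    _ ≤ ∑ i ∈ range (c + 1), μ {ω | X ω = k ∧ N ω = m ∧ R ω = i ∧ A ω = c - i} :=
        measure_biUnion_finset_le _ _
    _ = μ {ω | X ω = k ∧ N ω = m} * ENNReal.ofReal (binomConv p q k m c) := by
        rw [binomConv, ofReal_sum_of_nonneg fun i _ => mul_nonneg (binomPMF_nonneg hp0 hp1 k i)
          (binomPMF_nonneg hq0 hq1 m _), mul_sum]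
        exact sum_congr rfl fun i _ => hlaw k m i (c - i)

/-- As `R` and `A` may be non-measurable, subadditivity only gives `≤`; equality follows because
both sides sum to `μ {X = k ∧ N = m}` over `c`. -/
lemma measure_inter_eq [IsFiniteMeasure μ] (hp0 : 0 ≤ p) (hp1 : p ≤ 1) (hq0 : 0 ≤ q)
    (hq1 : q ≤ 1) (k m c : ℕ) :
    μ ({ω | X ω = k ∧ N ω = m} ∩ Y ⁻¹' {c})
      = μ {ω | X ω = k ∧ N ω = m} * ENNReal.ofReal (binomConv p q k m c) := by
  set S := {ω | X ω = k ∧ N ω = m}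
  have htotal : ∑' c, μ (S ∩ Y ⁻¹' {c}) = μ S :=
    tsum_measure_inter_preimage_singleton h.measurable_next S
  have hconv : ∑' c, ENNReal.ofReal (binomConv p q k m c) = 1 := by
    simpa [binomExpect_const] using
      tsum_ofReal_mul_binomConv (k := k) (m := m) hp0 hp1 hq0 hq1 (f := 1) zero_le_one
  refine ENNReal.eq_of_le_of_tsum_le (by rw [htotal]; exact measure_ne_top μ S)
    (h.measure_inter_le hp0 hp1 hq0 hq1 k m) ?_ c
  rw [ENNReal.tsum_mul_left, hconv, mul_one, htotal]

lemma lintegral_ofReal_comp [IsFiniteMeasure μ] (hp0 : 0 ≤ p) (hp1 : p ≤ 1) (hq0 : 0 ≤ q)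
    (hq1 : q ≤ 1) {f : ℕ → ℝ} (hf : 0 ≤ f) :
    ∫⁻ ω, ENNReal.ofReal (f (Y ω)) ∂μ
      = ∫⁻ ω, ENNReal.ofReal
          (binomExpect p (X ω) fun i => binomExpect q (N ω) fun j => f (i + j)) ∂μ := by
  set Z : Ω → ℕ × ℕ := fun ω => (X ω, N ω)
  have hZ : Measurable Z := h.measurable_prev.prodMk h.measurable_batch
  have hfiber : ∀ x : ℕ × ℕ, Z ⁻¹' {x} = {ω | X ω = x.1 ∧ N ω = x.2} := fun x => by
    ext ω; simp [Z, Prod.ext_iff]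
  rw [lintegral_comp_eq_tsum h.measurable_next (fun c => ENNReal.ofReal (f c)),
    lintegral_comp_eq_tsum hZ
    (fun x => ENNReal.ofReal (binomExpect p x.1 fun i => binomExpect q x.2 fun j => f (i + j)))]
  calc ∑' c, ENNReal.ofReal (f c) * μ (Y ⁻¹' {c})
      = ∑' c, ∑' x : ℕ × ℕ, ENNReal.ofReal (f c)
          * (μ (Z ⁻¹' {x}) * ENNReal.ofReal (binomConv p q x.1 x.2 c)) := by
        refine tsum_congr fun c => ?_
        rw [← tsum_measure_inter_preimage_singleton hZ, ← ENNReal.tsum_mul_left]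
        refine tsum_congr fun x => ?_
        rw [Set.inter_comm, hfiber, h.measure_inter_eq hp0 hp1 hq0 hq1]
    _ = ∑' x : ℕ × ℕ, μ (Z ⁻¹' {x})
          * ∑' c, ENNReal.ofReal (f c) * ENNReal.ofReal (binomConv p q x.1 x.2 c) := by
        rw [ENNReal.tsum_comm]
        refine tsum_congr fun x => ?_
        rw [← ENNReal.tsum_mul_left]
        exact tsum_congr fun c => by ring
    _ = _ := by
        refine tsum_congr fun x => ?_
        rw [tsum_ofReal_mul_binomConv hp0 hp1 hq0 hq1 hf, mul_comm]

lemma integral_comp [IsFiniteMeasure μ] (hp0 : 0 ≤ p) (hp1 : p ≤ 1) (hq0 : 0 ≤ q)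
    (hq1 : q ≤ 1) {f : ℕ → ℝ} (hf : 0 ≤ f) :
    ∫ ω, f (Y ω) ∂μ
      = ∫ ω, (binomExpect p (X ω) fun i => binomExpect q (N ω) fun j => f (i + j)) ∂μ := by
  set H : ℕ × ℕ → ℝ := fun x => binomExpect p x.1 fun i => binomExpect q x.2 fun j => f (i + j)
  have hH : 0 ≤ H := fun x =>
    binomExpect_nonneg hp0 hp1 fun i => binomExpect_nonneg hq0 hq1 fun j => hf (i + j)
  have hZ : Measurable fun ω => (X ω, N ω) := h.measurable_prev.prodMk h.measurable_batch
  rw [integral_eq_lintegral_of_nonneg_ae (f := fun ω => f (Y ω)) (.of_forall fun ω => hf _)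
      ((measurable_of_countable f).comp h.measurable_next).aestronglyMeasurable,
    integral_eq_lintegral_of_nonneg_ae (f := fun ω => H (X ω, N ω)) (.of_forall fun ω => hH _)
      ((measurable_of_countable H).comp hZ).aestronglyMeasurable,
    h.lintegral_ofReal_comp hp0 hp1 hq0 hq1 hf]

lemma integral_next [IsFiniteMeasure μ] (hp0 : 0 ≤ p) (hp1 : p ≤ 1) (hq0 : 0 ≤ q)
    (hq1 : q ≤ 1) (hX : Integrable (fun ω => (X ω : ℝ)) μ)
    (hN : Integrable (fun ω => (N ω : ℝ)) μ) :
    ∫ ω, (Y ω : ℝ) ∂μ = p * ∫ ω, (X ω : ℝ) ∂μ + q * ∫ ω, (N ω : ℝ) ∂μ := by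
  rw [h.integral_comp hp0 hp1 hq0 hq1 (f := fun c => (c : ℝ)) fun c => c.cast_nonneg]
  simp only [binomExpect_binomExpect_add]
  rw [integral_add (hX.const_mul p) (hN.const_mul q), integral_const_mul, integral_const_mul]

lemma integral_sq_next [IsFiniteMeasure μ] (hp0 : 0 ≤ p) (hp1 : p ≤ 1) (hq0 : 0 ≤ q)
    (hq1 : q ≤ 1) (hX : MemLp (fun ω => (X ω : ℝ)) 2 μ) (hN : MemLp (fun ω => (N ω : ℝ)) 2 μ)
    (hXN : IndepFun X N μ) :
    ∫ ω, (Y ω : ℝ) ^ 2 ∂μ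
      = p ^ 2 * ∫ ω, (X ω : ℝ) ^ 2 ∂μ + p * (1 - p) * ∫ ω, (X ω : ℝ) ∂μ
        + 2 * p * q * ((∫ ω, (X ω : ℝ) ∂μ) * ∫ ω, (N ω : ℝ) ∂μ)
        + q ^ 2 * ∫ ω, (N ω : ℝ) ^ 2 ∂μ + q * (1 - q) * ∫ ω, (N ω : ℝ) ∂μ := by
  have hXN' : IndepFun (fun ω => (X ω : ℝ)) (fun ω => (N ω : ℝ)) μ :=
    hXN.comp measurable_from_nat measurable_from_nat
  rw [h.integral_comp hp0 hp1 hq0 hq1 (f := fun c => (c : ℝ) ^ 2) fun c => sq_nonneg _]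
  simp only [binomExpect_binomExpect_add_sq]
  rw [← hXN'.integral_mul_eq_mul_integral hX.aestronglyMeasurable hN.aestronglyMeasurable]
  have h1X := hX.integrable one_le_two
  have h1N := hN.integrable one_le_two
  have h2X := hX.integrable_sq
  have h2N := hN.integrable_sq
  have hXN : Integrable (fun ω => (X ω : ℝ) * N ω) μ := hX.integrable_mul hN
  rw [integral_add, integral_add, integral_add, integral_add] <;>
    simp [integral_const_mul, Integrable.const_mul, *]

end IsBinomialUpdate

section Chain

variable {Ω : Type*} [MeasurableSpace Ω] {μ : Measure Ω} [IsProbabilityMeasure μ]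
  {p q b σ2 : ℝ} {n : ℕ} {C B : ℕ → Ω → ℕ}

lemma integral_chain_eq (hp0 : 0 ≤ p) (hp1 : p ≤ 1) (hq0 : 0 ≤ q) (hq1 : q ≤ 1)
    (hstep : ∀ t, IsBinomialUpdate μ p q (C t) (B (t + 1)) (C (t + 1)))
    (hC : ∀ t, Integrable (fun ω => (C t ω : ℝ)) μ)
    (hB : ∀ t, Integrable (fun ω => (B (t + 1) ω : ℝ)) μ)
    (hBmean : ∀ t, ∫ ω, (B (t + 1) ω : ℝ) ∂μ = b) (hC0 : ∀ ω, C 0 ω = n)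
    (hbq : b * q = n * (1 - p)) (t : ℕ) :
    ∫ ω, (C t ω : ℝ) ∂μ = n := by
  induction t with
  | zero => simp [hC0]
  | succ t ih =>
    rw [(hstep t).integral_next hp0 hp1 hq0 hq1 (hC t) (hB t), ih, hBmean]
    linear_combination hbq

lemma integral_sub_integral_sq_chain (hp0 : 0 ≤ p) (hp1 : p < 1) (hq0 : 0 ≤ q) (hq1 : q ≤ 1)
    (hstep : ∀ t, IsBinomialUpdate μ p q (C t) (B (t + 1)) (C (t + 1)))
    (hind : ∀ t, IndepFun (C t) (B (t + 1)) μ)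
    (hC : ∀ t, MemLp (fun ω => (C t ω : ℝ)) 2 μ)
    (hB : ∀ t, MemLp (fun ω => (B (t + 1) ω : ℝ)) 2 μ)
    (hBmean : ∀ t, ∫ ω, (B (t + 1) ω : ℝ) ∂μ = b)
    (hBsq : ∀ t, ∫ ω, (B (t + 1) ω : ℝ) ^ 2 ∂μ = σ2 + b ^ 2) (hC0 : ∀ ω, C 0 ω = n)
    (hbq : b * q = n * (1 - p)) (t : ℕ) :
    ∫ ω, ((C t ω : ℝ) - ∫ ω', (C t ω' : ℝ) ∂μ) ^ 2 ∂μ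
      = (1 - (p ^ 2) ^ t) * ((1 + p - q) / (1 + p) * n + σ2 * q ^ 2 / (1 - p ^ 2)) := by
  set V := (1 + p - q) / (1 + p) * n + σ2 * q ^ 2 / (1 - p ^ 2)
  have hmean := integral_chain_eq hp0 hp1.le hq0 hq1 hstep (fun t => (hC t).integrable one_le_two)
    (fun t => (hB t).integrable one_le_two) hBmean hC0 hbq
  have hrec s : ∫ ω, (C (s + 1) ω : ℝ) ^ 2 ∂μ = p ^ 2 * ∫ ω, (C s ω : ℝ) ^ 2 ∂μ
      + (p * (1 - p) * n + 2 * p * q * (n * b) + q ^ 2 * (σ2 + b ^ 2) + q * (1 - q) * b) := by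
    rw [(hstep s).integral_sq_next hp0 hp1.le hq0 hq1 (hC s) (hB s) (hind s), hmean, hBmean, hBsq]
    ring
  have hfix : (1 - p ^ 2) * V = (1 + p - q) * (1 - p) * n + σ2 * q ^ 2 := by
    have : 1 + p ≠ 0 := by linarith
    have : 1 - p ^ 2 ≠ 0 := by nlinarith
    simp only [V]
    field_simp
    ring
  -- With `x = b q`, the fixed-point equation and `(1 - p²) × hfix` differ by
  -- `(x - n (1 - p)) (x + n (1 - p) + 2 p n + 1 - q)`.
  have hsq := sub_eq_pow_mul_sub_of_recurrence (x := fun s => ∫ ω, (C s ω : ℝ) ^ 2 ∂μ)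
    (L := (n : ℝ) ^ 2 + V) hrec
    (by linear_combination hfix - (2 * p * n + b * q + n * (1 - p) + 1 - q) * hbq) t
  rw [eq_sub_of_add_eq (integral_sq_eq_integral_sub_sq_add (hC t)).symm, hmean]
  simp only [hC0, integral_const, probReal_univ, smul_eq_mul, one_mul] at hsq
  linear_combination hsq

end Chain

theorem ttbs_variance_sample_size_general
    {Ω : Type*} [MeasurableSpace Ω] (μ : Measure Ω) [IsProbabilityMeasure μ]
    (p q b : ℝ) (n : ℕ)
    (hp : 0 < p) (hp1 : p < 1) (hq0 : 0 < q) (hq1 : q ≤ 1)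
    (hbq : b * q = (n : ℝ) * (1 - p))
    (C B R A : ℕ → Ω → ℕ)
    (hmC : ∀ t, Measurable (C t)) (hmB : ∀ t, Measurable (B t))
    (hC0 : ∀ ω, C 0 ω = n)
    (hsum : ∀ t ω, C (t + 1) ω = R (t + 1) ω + A (t + 1) ω)
    (hbinom : ∀ t k m i j,
      μ {ω | C t ω = k ∧ B (t + 1) ω = m ∧ R (t + 1) ω = i ∧ A (t + 1) ω = j}
        = μ {ω | C t ω = k ∧ B (t + 1) ω = m}
          * ENNReal.ofReal (binomPMF p k i * binomPMF q m j))
    (hBind : ∀ t k m, μ {ω | C t ω = k ∧ B (t + 1) ω = m}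
        = μ {ω | C t ω = k} * μ {ω | B (t + 1) ω = m})
    (hBiid : ∀ t m, μ {ω | B (t + 1) ω = m} = μ {ω | B 1 ω = m})
    (σ2 : ℝ)
    (hBmean : ∫ ω, (B 1 ω : ℝ) ∂μ = b)
    (hBint2 : Integrable (fun ω => ((B 1 ω : ℝ) - b) ^ 2) μ)
    (hBvar : ∫ ω, ((B 1 ω : ℝ) - b) ^ 2 ∂μ = σ2)
    (hCint2 : ∀ t, Integrable (fun ω => ((C t ω : ℝ)) ^ 2) μ) :
    ∃ K : ℝ, 0 ≤ K ∧ ∀ t : ℕ, 1 ≤ t →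
      |(∫ ω, ((C t ω : ℝ) - ∫ ω', (C t ω' : ℝ) ∂μ) ^ 2 ∂μ)
          - (((1 + p - q) / (1 + p)) * n + σ2 * q ^ 2 / (1 - p ^ 2))| ≤ K * p ^ t := by
  have hp0 := hp.le
  have hC t : MemLp (fun ω => (C t ω : ℝ)) 2 μ := (memLp_two_iff_integrable_sq
    (measurable_from_nat.comp (hmC t)).aestronglyMeasurable).2 (hCint2 t)
  have hB1 : MemLp (fun ω => (B 1 ω : ℝ)) 2 μ := memLp_two_of_integrable_sub_sq
    (measurable_from_nat.comp (hmB 1)).aestronglyMeasurable b hBint2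
  have hident t : IdentDistrib (fun ω => (B (t + 1) ω : ℝ)) (fun ω => (B 1 ω : ℝ)) μ μ :=
    (identDistrib_of_measure_eq (hmB _) (hmB 1) (hBiid t)).comp measurable_from_nat
  have hBsq t : ∫ ω, (B (t + 1) ω : ℝ) ^ 2 ∂μ = σ2 + b ^ 2 := by
    have hsq := ((hident t).comp (measurable_id.pow_const 2)).integral_eq
    simp only [Function.comp_def, id] at hsq
    rw [hsq, integral_sq_eq_integral_sub_sq_add hB1, hBmean, hBvar]
  have hvar := integral_sub_integral_sq_chain hp0 hp1 hq0.le hq1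
    (fun t => ⟨hmC t, hmB (t + 1), hmC (t + 1), R (t + 1), A (t + 1), hsum t, hbinom t⟩)
    (fun t => indepFun_of_measure_eq_mul (hmC t) (hmB (t + 1)) (hBind t)) hC
    (fun t => (hident t).symm.memLp_snd hB1) (fun t => (hident t).integral_eq.trans hBmean)
    hBsq hC0 hbq
  set V := (1 + p - q) / (1 + p) * n + σ2 * q ^ 2 / (1 - p ^ 2)
  refine ⟨|V|, abs_nonneg V, fun t _ => ?_⟩
  rw [hvar, ← pow_mul, show (1 - p ^ (2 * t)) * V - V = -(p ^ (2 * t) * V) by ring, abs_neg,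
    abs_mul, abs_of_nonneg (by positivity), mul_comm]
  exact mul_le_mul_of_nonneg_left (pow_le_pow_of_le_one hp0 hp1.le (by omega)) (abs_nonneg V)

/-- For the T-TBS sample-size chain `C_t = R_t + A_t` with, conditionally on
`C_{t-1}` and the batch size `B_t`, `R_t ~ Binomial (C_{t-1}, p)` and
`A_t ~ Binomial (B_t, q)` independent, `{B_t}` i.i.d. with mean `b` and variance `σ²`,
`q = n (1 - p) / b`, and `C_0 = n`:
`Var[C_t] = α n + σ² q² / (1 - p²) + O(p^t)` where `α = (1 + p - q) / (1 + p)`. -/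
theorem ttbs_variance_sample_size
    {Ω : Type*} [MeasurableSpace Ω] (μ : Measure Ω) [IsProbabilityMeasure μ]
    (p q b : ℝ) (n : ℕ)
    (hp : 0 < p) (hp1 : p < 1) (hq0 : 0 < q) (hq1 : q ≤ 1) (hb : 0 < b)
    (hbq : b * q = (n : ℝ) * (1 - p))
    (C B R A : ℕ → Ω → ℕ)
    (hmC : ∀ t, Measurable (C t)) (hmB : ∀ t, Measurable (B t))
    (hC0 : ∀ ω, C 0 ω = n)
    (hsum : ∀ t ω, C (t + 1) ω = R (t + 1) ω + A (t + 1) ω)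
    (hbinom : ∀ t k m i j,
      μ {ω | C t ω = k ∧ B (t + 1) ω = m ∧ R (t + 1) ω = i ∧ A (t + 1) ω = j}
        = μ {ω | C t ω = k ∧ B (t + 1) ω = m}
          * ENNReal.ofReal (binomPMF p k i * binomPMF q m j))
    (hBind : ∀ t k m, μ {ω | C t ω = k ∧ B (t + 1) ω = m}
        = μ {ω | C t ω = k} * μ {ω | B (t + 1) ω = m})
    (hBiid : ∀ t m, μ {ω | B (t + 1) ω = m} = μ {ω | B 1 ω = m})
    (σ2 : ℝ)
    (hBint : Integrable (fun ω => (B 1 ω : ℝ)) μ)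
    (hBmean : ∫ ω, (B 1 ω : ℝ) ∂μ = b)
    (hBint2 : Integrable (fun ω => ((B 1 ω : ℝ) - b) ^ 2) μ)
    (hBvar : ∫ ω, ((B 1 ω : ℝ) - b) ^ 2 ∂μ = σ2)
    (hCint : ∀ t, Integrable (fun ω => (C t ω : ℝ)) μ)
    (hCint2 : ∀ t, Integrable (fun ω => ((C t ω : ℝ)) ^ 2) μ) :
    ∃ K : ℝ, 0 ≤ K ∧ ∀ t : ℕ, 1 ≤ t →
      |(∫ ω, ((C t ω : ℝ) - ∫ ω', (C t ω' : ℝ) ∂μ) ^ 2 ∂μ)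
          - (((1 + p - q) / (1 + p)) * n + σ2 * q ^ 2 / (1 - p ^ 2))| ≤ K * p ^ t :=
  ttbs_variance_sample_size_general μ p q b n hp hp1 hq0 hq1 hbq C B R A hmC hmB hC0 hsum hbinom
    hBind hBiid σ2 hBmean hBint2 hBvar hCint2
end

section
/- Under the T-TBS assumptions with C_0 = n and bounded batch sizes of upper-support ratio r < ∞, for ε > r − 1, P(C_t ≥ (1+ε)n) ≤ e^{−n ν⁺} (1 + O(nε p^t)) where ν⁺ = (1+ε)ln((1+ε)/r) − (1+ε−r). -/
/-!
Let `G_t(u) = E[u ^ C_t]`. One T-TBS step thins `C_t` binomially with parameter `p` and adds a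
`Binomial(B, q)` batch, so `G_{t+1}(u) ≤ G_t(1 + p (u - 1)) · E[(1 + q (u - 1)) ^ B]`, and the
batch factor is at most `exp (r b q (u - 1)) = exp (r n (1 - p) (u - 1))`. Hence the Poisson pgf
`exp (r n (u - 1))` bounds `G_t` for every `t`: it does so at `t = 0` because `r ≥ 1`, and the step
preserves it. The Chernoff bound at `u = (1 + ε) / r` then gives `P(C_t ≥ (1 + ε) n) ≤ exp (-n ν⁺)`
uniformly in `t`, i.e. the claim with `K = 0`.
-/

open MeasureTheory

open Real
open scoped ENNReal

lemma binomPMF_nonneg_s13 {x : ℝ} (hx0 : 0 ≤ x) (hx1 : x ≤ 1) (k i : ℕ) : 0 ≤ binomPMF x k i := by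
  have : 0 ≤ 1 - x := sub_nonneg.2 hx1
  unfold binomPMF
  split_ifs <;> positivity

lemma tsum_ofReal_binomPMF_mul_pow {x u : ℝ} (hx0 : 0 ≤ x) (hx1 : x ≤ 1) (hu : 0 ≤ u) (k : ℕ) :
    ∑' i, ENNReal.ofReal (binomPMF x k i * u ^ i) = ENNReal.ofReal ((1 - x + x * u) ^ k) := by
  rw [tsum_eq_sum (s := Finset.range (k + 1)) fun i hi => by
      simp [binomPMF, show ¬i ≤ k by simpa [Nat.lt_succ_iff] using hi],
    ← ENNReal.ofReal_sum_of_nonneg fun i _ =>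
      mul_nonneg (binomPMF_nonneg_s13 hx0 hx1 k i) (by positivity),
    show 1 - x + x * u = x * u + (1 - x) by ring, add_pow]
  refine congrArg _ (Finset.sum_congr rfl fun i hi => ?_)
  rw [binomPMF, if_pos (Nat.lt_succ_iff.mp (Finset.mem_range.mp hi)), mul_pow]
  ring

lemma pow_le_exp_mul_sub_one {u : ℝ} (hu : 0 ≤ u) (n : ℕ) : u ^ n ≤ exp (n * (u - 1)) := by
  rw [exp_nat_mul]
  exact pow_le_pow_left₀ hu (by linarith [add_one_le_exp (u - 1)]) n

section pgf

variable {Ω : Type*} [MeasurableSpace Ω] (μ : Measure Ω)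

/-- `E[u ^ X]`, written as a sum over the level sets of `X` so that `X` need not be measurable. -/
noncomputable def pgf (X : Ω → ℕ) (u : ℝ) : ℝ≥0∞ :=
  ∑' k, μ {ω | X ω = k} * ENNReal.ofReal (u ^ k)

lemma pgf_const [IsProbabilityMeasure μ] (n : ℕ) (u : ℝ) :
    pgf μ (fun _ => n) u = ENNReal.ofReal (u ^ n) := by
  rw [pgf, tsum_eq_single n fun k hk => by simp [Ne.symm hk]]
  simp

lemma pgf_le_tsum_of_eq_comp {α : Type*} [Countable α] {X : Ω → ℕ} (W : Ω → α) (φ : α → ℕ)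
    (hX : ∀ ω, X ω = φ (W ω)) (u : ℝ) :
    pgf μ X u ≤ ∑' a, μ {ω | W ω = a} * ENNReal.ofReal (u ^ φ a) := by
  have hcover (k : ℕ) : μ {ω | X ω = k} ≤ ∑' a, μ {ω | W ω = a ∧ φ a = k} := by
    refine (measure_mono fun ω (hω : X ω = k) => ?_).trans (measure_iUnion_le _)
    exact Set.mem_iUnion.2 ⟨W ω, rfl, (hX ω).symm.trans hω⟩
  calc pgf μ X u
      ≤ ∑' k, ∑' a, μ {ω | W ω = a ∧ φ a = k} * ENNReal.ofReal (u ^ k) :=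
        ENNReal.tsum_le_tsum fun k => by rw [ENNReal.tsum_mul_right]; gcongr; exact hcover k
    _ = ∑' a, ∑' k, μ {ω | W ω = a ∧ φ a = k} * ENNReal.ofReal (u ^ k) := ENNReal.tsum_comm
    _ = _ := tsum_congr fun a => by
        rw [tsum_eq_single (φ a) fun k hk => by simp [Ne.symm hk]]
        simp

lemma tsum_measure_mul_binomPMF_mul_pow {x u : ℝ} (hx0 : 0 ≤ x) (hx1 : x ≤ 1) (hu : 0 ≤ u)
    (X : Ω → ℕ) :
    ∑' a : ℕ × ℕ, μ {ω | X ω = a.1} * ENNReal.ofReal (binomPMF x a.1 a.2 * u ^ a.2)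
      = pgf μ X (1 - x + x * u) := by
  simp only [ENNReal.tsum_prod', ENNReal.tsum_mul_left, tsum_ofReal_binomPMF_mul_pow hx0 hx1 hu]
  rfl

/-- `hlaw` says that `X` and `Y` are independent and that, given them, `R ~ Bin(X, p)` and
`A ~ Bin(Y, q)` independently. -/
lemma pgf_add_le_of_binomial {p q u : ℝ} (hp0 : 0 ≤ p) (hp1 : p ≤ 1) (hq0 : 0 ≤ q) (hq1 : q ≤ 1)
    (hu : 0 ≤ u) (X Y R A : Ω → ℕ)
    (hlaw : ∀ k m i j, μ {ω | X ω = k ∧ Y ω = m ∧ R ω = i ∧ A ω = j}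
      = μ {ω | X ω = k} * μ {ω | Y ω = m} * ENNReal.ofReal (binomPMF p k i * binomPMF q m j)) :
    pgf μ (fun ω => R ω + A ω) u ≤ pgf μ X (1 - p + p * u) * pgf μ Y (1 - q + q * u) := by
  calc pgf μ (fun ω => R ω + A ω) u
      ≤ ∑' a : (ℕ × ℕ) × (ℕ × ℕ), μ {ω | ((X ω, R ω), (Y ω, A ω)) = a}
          * ENNReal.ofReal (u ^ (a.1.2 + a.2.2)) :=
        pgf_le_tsum_of_eq_comp μ _ (fun a : (ℕ × ℕ) × (ℕ × ℕ) => a.1.2 + a.2.2) (fun _ => rfl) u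
    _ = ∑' a : (ℕ × ℕ) × (ℕ × ℕ),
          (μ {ω | X ω = a.1.1} * ENNReal.ofReal (binomPMF p a.1.1 a.1.2 * u ^ a.1.2))
          * (μ {ω | Y ω = a.2.1} * ENNReal.ofReal (binomPMF q a.2.1 a.2.2 * u ^ a.2.2)) := by
        refine tsum_congr fun ⟨⟨k, i⟩, m, j⟩ => ?_
        have hset : {ω | ((X ω, R ω), (Y ω, A ω)) = ((k, i), (m, j))}
            = {ω | X ω = k ∧ Y ω = m ∧ R ω = i ∧ A ω = j} := by
          ext ω; simp only [Set.mem_ofPred_eq, Prod.mk.injEq]; tauto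
        have := binomPMF_nonneg_s13 hp0 hp1 k i
        have := binomPMF_nonneg_s13 hq0 hq1 m j
        rw [hset, hlaw, pow_add, ENNReal.ofReal_mul (by positivity),
          ENNReal.ofReal_mul (by positivity), ENNReal.ofReal_mul (by positivity),
          ENNReal.ofReal_mul (by positivity)]
        ring
    _ = pgf μ X (1 - p + p * u) * pgf μ Y (1 - q + q * u) := by
        rw [ENNReal.tsum_prod', ← tsum_measure_mul_binomPMF_mul_pow μ hp0 hp1 hu,
          ← tsum_measure_mul_binomPMF_mul_pow μ hq0 hq1 hu, ← ENNReal.tsum_mul_right]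
        simp only [ENNReal.tsum_mul_left]

lemma pgf_le_exp_of_ae_le [IsProbabilityMeasure μ] {X : Ω → ℕ} (hX : Measurable X) {c w : ℝ}
    (hc : ∀ᵐ ω ∂μ, (X ω : ℝ) ≤ c) (hw : 1 ≤ w) :
    pgf μ X w ≤ ENNReal.ofReal (exp (c * (w - 1))) := by
  have hnull (m : ℕ) (hm : c < m) : μ {ω | X ω = m} = 0 :=
    measure_mono_null (fun ω (hω : X ω = m) => by simp [hω, hm]) (ae_iff.1 hc)
  have hterm (m : ℕ) : μ {ω | X ω = m} * ENNReal.ofReal (w ^ m)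
      ≤ μ {ω | X ω = m} * ENNReal.ofReal (exp (c * (w - 1))) := by
    rcases le_or_gt (m : ℝ) c with hm | hm
    · gcongr
      exact (pow_le_exp_mul_sub_one (by linarith) m).trans
        (exp_le_exp.2 (mul_le_mul_of_nonneg_right hm (by linarith)))
    · simp [hnull m hm]
  have htotal : ∑' m, μ {ω | X ω = m} = 1 := by
    change ∑' m, μ (X ⁻¹' {m}) = 1
    rw [← measure_iUnion (pairwise_disjoint_fiber X) fun m => hX (measurableSet_singleton m),
      ← Set.preimage_iUnion, Set.iUnion_of_singleton, Set.preimage_univ, measure_univ]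
  calc pgf μ X w ≤ ∑' m, μ {ω | X ω = m} * ENNReal.ofReal (exp (c * (w - 1))) :=
        ENNReal.tsum_le_tsum hterm
    _ = ENNReal.ofReal (exp (c * (w - 1))) := by rw [ENNReal.tsum_mul_right, htotal, one_mul]

/-- The Poisson pgf `exp (c (u - 1))` is preserved by binomial thinning with parameter `p`
followed by an independent addition whose pgf is at most that of `Poisson (c (1 - p))`. -/
lemma pgf_le_exp_of_step {C : ℕ → Ω → ℕ} {p c : ℝ} (hp : 0 ≤ p)
    (h0 : ∀ u, 1 ≤ u → pgf μ (C 0) u ≤ ENNReal.ofReal (exp (c * (u - 1))))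
    (hstep : ∀ t u, 1 ≤ u → pgf μ (C (t + 1)) u
      ≤ pgf μ (C t) (1 - p + p * u) * ENNReal.ofReal (exp (c * (1 - p) * (u - 1)))) :
    ∀ t u, 1 ≤ u → pgf μ (C t) u ≤ ENNReal.ofReal (exp (c * (u - 1))) := by
  intro t
  induction t with
  | zero => exact h0
  | succ t ih =>
    intro u hu
    calc pgf μ (C (t + 1)) u
        ≤ ENNReal.ofReal (exp (c * (1 - p + p * u - 1)))
          * ENNReal.ofReal (exp (c * (1 - p) * (u - 1))) := by
          grw [hstep t u hu, ih _ (by nlinarith)]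
      _ = ENNReal.ofReal (exp (c * (u - 1))) := by
          rw [← ENNReal.ofReal_mul (exp_nonneg _), ← exp_add]
          ring_nf

lemma measure_le_mul_rpow_le_pgf (X : Ω → ℕ) {a s : ℝ} (hs : 1 ≤ s) :
    μ {ω | a ≤ X ω} * ENNReal.ofReal (s ^ a) ≤ pgf μ X s := by
  have hcover : μ {ω | a ≤ X ω} ≤ ∑' k : ℕ, μ {ω | X ω = k ∧ a ≤ k} := by
    refine (measure_mono fun ω (hω : a ≤ X ω) => ?_).trans (measure_iUnion_le _)
    exact Set.mem_iUnion.2 ⟨X ω, rfl, hω⟩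
  grw [hcover, ← ENNReal.tsum_mul_right]
  refine ENNReal.tsum_le_tsum fun k => ?_
  by_cases hk : a ≤ k
  · simp only [hk, and_true]
    gcongr
    exact (Real.rpow_le_rpow_of_exponent_le hs hk).trans_eq (Real.rpow_natCast s k)
  · simp [hk]

lemma toReal_measure_le_exp_of_pgf_le (X : Ω → ℕ) {a s c : ℝ} (hs : 1 ≤ s)
    (h : pgf μ X s ≤ ENNReal.ofReal (exp (c * (s - 1)))) :
    (μ {ω | a ≤ X ω}).toReal ≤ exp (c * (s - 1) - a * log s) := by
  have hs0 : 0 < s := by linarith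
  have hmarkov := ENNReal.toReal_mono ENNReal.ofReal_ne_top
    ((measure_le_mul_rpow_le_pgf μ X (a := a) hs).trans h)
  rw [ENNReal.toReal_mul, ENNReal.toReal_ofReal (by positivity),
    ENNReal.toReal_ofReal (exp_nonneg _), Real.rpow_def_of_pos hs0, ← le_div_iff₀ (exp_pos _), ← exp_sub] at hmarkov
  rwa [mul_comm a]

end pgf

theorem ttbs_upper_deviation_bound_bounded_batches_general
    {Ω : Type*} [MeasurableSpace Ω] (μ : Measure Ω) [IsProbabilityMeasure μ]
    (p q b : ℝ) (n : ℕ)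
    (hp : 0 < p) (hp1 : p < 1) (hq0 : 0 < q) (hq1 : q ≤ 1)
    (hbq : b * q = (n : ℝ) * (1 - p))
    (C B R A : ℕ → Ω → ℕ)
    (hmB : ∀ t, Measurable (B t))
    (hC0 : ∀ ω, C 0 ω = n)
    (hsum : ∀ t ω, C (t + 1) ω = R (t + 1) ω + A (t + 1) ω)
    (hbinom : ∀ t k m i j,
      μ {ω | C t ω = k ∧ B (t + 1) ω = m ∧ R (t + 1) ω = i ∧ A (t + 1) ω = j}
        = μ {ω | C t ω = k ∧ B (t + 1) ω = m}
          * ENNReal.ofReal (binomPMF p k i * binomPMF q m j))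
    (hBind : ∀ t k m, μ {ω | C t ω = k ∧ B (t + 1) ω = m}
        = μ {ω | C t ω = k} * μ {ω | B (t + 1) ω = m})
    (hBiid : ∀ t m, μ {ω | B (t + 1) ω = m} = μ {ω | B 1 ω = m})
    (r : ℝ) (hr : 1 ≤ r)
    (hBbdd : ∀ᵐ ω ∂μ, (B 1 ω : ℝ) ≤ r * b)
    (ε : ℝ) (hε : r - 1 < ε) :
    ∃ K : ℝ, 0 ≤ K ∧ ∀ t : ℕ,
      (μ {ω | (1 + ε) * (n : ℝ) ≤ (C t ω : ℝ)}).toReal ≤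
        Real.exp (-(n : ℝ) * ((1 + ε) * Real.log ((1 + ε) / r) - (1 + ε - r)))
          * (1 + K * (n : ℝ) * ε * p ^ t) := by
  have hbase (u : ℝ) (hu : 1 ≤ u) : pgf μ (C 0) u ≤ ENNReal.ofReal (exp (r * n * (u - 1))) := by
    rw [show C 0 = fun _ => n from funext hC0, pgf_const]
    exact ENNReal.ofReal_le_ofReal ((pow_le_exp_mul_sub_one (by linarith) n).trans
      (exp_le_exp.2 (by nlinarith [mul_nonneg n.cast_nonneg (sub_nonneg.2 hu)])))
  have hstep (t : ℕ) (u : ℝ) (hu : 1 ≤ u) : pgf μ (C (t + 1)) u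
      ≤ pgf μ (C t) (1 - p + p * u) * ENNReal.ofReal (exp (r * n * (1 - p) * (u - 1))) := by
    have hbatch :
        pgf μ (B 1) (1 - q + q * u) ≤ ENNReal.ofReal (exp (r * n * (1 - p) * (u - 1))) := by
      convert pgf_le_exp_of_ae_le μ (hmB 1) hBbdd (w := 1 - q + q * u) (by nlinarith) using 3
      linear_combination (-r * (u - 1)) * hbq
    calc pgf μ (C (t + 1)) u = pgf μ (fun ω => R (t + 1) ω + A (t + 1) ω) u :=
          congrArg (pgf μ · u) (funext (hsum t))
      _ ≤ pgf μ (C t) (1 - p + p * u) * pgf μ (B (t + 1)) (1 - q + q * u) :=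
          pgf_add_le_of_binomial μ hp.le hp1.le hq0.le hq1 (by linarith) _ _ _ _
            fun k m i j => by rw [hbinom, hBind]
      _ = pgf μ (C t) (1 - p + p * u) * pgf μ (B 1) (1 - q + q * u) := by simp only [pgf, hBiid]
      _ ≤ _ := by gcongr
  have hs : 1 ≤ (1 + ε) / r := by rw [le_div_iff₀ (by linarith)]; linarith
  refine ⟨0, le_rfl, fun t => ?_⟩
  calc (μ {ω | (1 + ε) * (n : ℝ) ≤ (C t ω : ℝ)}).toReal
      ≤ exp (r * n * ((1 + ε) / r - 1) - (1 + ε) * n * log ((1 + ε) / r)) :=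
        toReal_measure_le_exp_of_pgf_le μ (C t) hs (pgf_le_exp_of_step μ hp.le hbase hstep t _ hs)
    _ = _ := by
        field_simp
        ring_nf

/-- For the T-TBS sample-size chain started at `C_0 = n` with i.i.d. batch
sizes of mean `b` bounded by `b* = r b` (upper-support ratio `r ≥ 1`), for `ε > r - 1`:
`P(C_t ≥ (1+ε) n) ≤ exp (-n ν⁺) (1 + O(n ε p^t))`, where
`ν⁺ = (1+ε) log ((1+ε)/r) - (1+ε-r)`. -/
theorem ttbs_upper_deviation_bound_bounded_batches
    {Ω : Type*} [MeasurableSpace Ω] (μ : Measure Ω) [IsProbabilityMeasure μ]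
    (p q b : ℝ) (n : ℕ)
    (hp : 0 < p) (hp1 : p < 1) (hq0 : 0 < q) (hq1 : q ≤ 1) (hb : 0 < b)
    (hbq : b * q = (n : ℝ) * (1 - p))
    (C B R A : ℕ → Ω → ℕ)
    (hmC : ∀ t, Measurable (C t)) (hmB : ∀ t, Measurable (B t))
    (hC0 : ∀ ω, C 0 ω = n)
    (hsum : ∀ t ω, C (t + 1) ω = R (t + 1) ω + A (t + 1) ω)
    (hbinom : ∀ t k m i j,
      μ {ω | C t ω = k ∧ B (t + 1) ω = m ∧ R (t + 1) ω = i ∧ A (t + 1) ω = j}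
        = μ {ω | C t ω = k ∧ B (t + 1) ω = m}
          * ENNReal.ofReal (binomPMF p k i * binomPMF q m j))
    (hBind : ∀ t k m, μ {ω | C t ω = k ∧ B (t + 1) ω = m}
        = μ {ω | C t ω = k} * μ {ω | B (t + 1) ω = m})
    (hBiid : ∀ t m, μ {ω | B (t + 1) ω = m} = μ {ω | B 1 ω = m})
    (hBint : Integrable (fun ω => (B 1 ω : ℝ)) μ)
    (hBmean : ∫ ω, (B 1 ω : ℝ) ∂μ = b)
    (r : ℝ) (hr : 1 ≤ r)
    (hBbdd : ∀ᵐ ω ∂μ, (B 1 ω : ℝ) ≤ r * b)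
    (ε : ℝ) (hε : r - 1 < ε) :
    ∃ K : ℝ, 0 ≤ K ∧ ∀ t : ℕ,
      (μ {ω | (1 + ε) * (n : ℝ) ≤ (C t ω : ℝ)}).toReal ≤
        Real.exp (-(n : ℝ) * ((1 + ε) * Real.log ((1 + ε) / r) - (1 + ε - r)))
          * (1 + K * (n : ℝ) * ε * p ^ t) :=
  ttbs_upper_deviation_bound_bounded_batches_general μ p q b n hp hp1 hq0 hq1 hbq C B R A hmB hC0
    hsum hbinom hBind hBiid r hr hBbdd ε hε
end
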